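/- Fix t ≥ 1, 0 ≤ λ < n, κ ≥ 1 and 0 < ε < 1. Suppose J ⊆ I ⊆ K are cubes in ℝⁿ with dist(J, ∂I) > 2√n · ℓ(J)^ε · ℓ(I)^{1−ε}. Then for any positive locally finite measure σ, P^λ_κ(J, σ·1_{K∖I}) ≲ (ℓ(J)/ℓ(I))^{κ − ε(n+κ−λ)} · P^λ_κ(I, σ·1_{K∖I}), with implicit constant independent of J, I, K, σ. -/

import Mathlib

open MeasureTheory
open scoped ENNReal

noncomputable section

/-- A dyadic cube in `ℝⁿ`, of side length `2^k`, with lower-left corner `2^k • m`. -/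
structure DyadicCube (n : ℕ) where
  k : ℤ
  m : Fin n → ℤ

namespace DyadicCube

variable {n : ℕ}

def toSet (Q : DyadicCube n) : Set (Fin n → ℝ) :=
  {x | ∀ i, (Q.m i : ℝ) * 2 ^ Q.k ≤ x i ∧ x i < ((Q.m i : ℝ) + 1) * 2 ^ Q.k}

def side (Q : DyadicCube n) : ℝ := 2 ^ Q.k

def center (Q : DyadicCube n) : Fin n → ℝ := fun i => ((Q.m i : ℝ) + 1 / 2) * 2 ^ Q.k

end DyadicCube

/-- The `κ`-th order `λ`-fractional Poisson integral `P^λ_κ(Q, ν)`. -/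
def poisson (n κ : ℕ) (lam : ℝ) (Q : DyadicCube n) (ν : Measure (Fin n → ℝ)) : ℝ≥0∞ :=
  ∫⁻ y, ENNReal.ofReal (Q.side ^ (κ : ℝ) / (Q.side + dist y Q.center) ^ ((n : ℝ) + κ - lam)) ∂ν

namespace DyadicCube

lemma side_pos (Q : DyadicCube n) : 0 < Q.side := by
  unfold side; positivity

lemma toSet_eq (Q : DyadicCube n) :
    Q.toSet = Set.pi Set.univ fun i =>
      Set.Ico ((Q.m i : ℝ) * 2 ^ Q.k) (((Q.m i : ℝ) + 1) * 2 ^ Q.k) := by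
  ext x; simp [toSet, Set.mem_pi, Set.mem_Ico]

lemma lower_lt_upper (Q : DyadicCube n) (i : Fin n) :
    (Q.m i : ℝ) * 2 ^ Q.k < ((Q.m i : ℝ) + 1) * 2 ^ Q.k := by
  have h : (0:ℝ) < 2 ^ Q.k := by positivity
  nlinarith

lemma measurableSet_toSet (Q : DyadicCube n) : MeasurableSet Q.toSet := by
  rw [Q.toSet_eq]
  exact MeasurableSet.univ_pi fun i => measurableSet_Ico

lemma center_mem (Q : DyadicCube n) : Q.center ∈ Q.toSet := by
  intro i
  have h : (0:ℝ) < 2 ^ Q.k := by positivity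
  constructor <;> [skip; skip] <;> · unfold center; nlinarith

end DyadicCube

/-- clamping to `[a,b]` moves a point closer to any point of `[a,b]`. -/
lemma clamp_abs_le (a b c y : ℝ) (hac : a ≤ c) (hcb : c ≤ b) :
    |c - max a (min y b)| ≤ |c - y| := by
  rcases le_total y a with h | h
  · rw [min_eq_left (h.trans (hac.trans hcb)), max_eq_left h,
      abs_of_nonneg (by linarith), abs_of_nonneg (by linarith)]
    linarith
  · rcases le_total b y with h2 | h2
    · rw [min_eq_right h2, max_eq_right (hac.trans hcb),
        abs_of_nonpos (by linarith), abs_of_nonpos (by linarith)]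
      linarith
    · rw [min_eq_left h2, max_eq_right h]

/-- **The Poisson inequality for good cubes.**
If `J ⊆ I ⊆ K` and `dist(J, ∂I) > 2√n ℓ(J)^ε ℓ(I)^{1−ε}`, then
`P^λ_κ(J, σ 1_{K∖I}) ≲ (ℓ(J)/ℓ(I))^{κ − ε(n+κ−λ)} P^λ_κ(I, σ 1_{K∖I})`,
with implicit constant independent of `J, I, K, σ`. -/
theorem stmt_6 (n κ : ℕ) (lam ε : ℝ) (hlam0 : 0 ≤ lam) (hlamn : lam < n)
    (hκ : 1 ≤ κ) (hε : 0 < ε) (hε1 : ε < 1) :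
    ∃ C > (0 : ℝ),
      ∀ (σ : Measure (Fin n → ℝ)), IsLocallyFiniteMeasure σ →
      ∀ J I K : DyadicCube n,
        J.toSet ⊆ I.toSet → I.toSet ⊆ K.toSet →
        (∀ x ∈ J.toSet, ∀ y ∈ frontier I.toSet,
          2 * Real.sqrt n * J.side ^ ε * I.side ^ (1 - ε) < dist x y) →
        poisson n κ lam J (σ.restrict (K.toSet \ I.toSet)) ≤
          ENNReal.ofReal (C * (J.side / I.side) ^ ((κ : ℝ) - ε * ((n : ℝ) + κ - lam))) *
            poisson n κ lam I (σ.restrict (K.toSet \ I.toSet)) := by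
  have hn : 0 < n := by
    rcases Nat.eq_zero_or_pos n with h | h
    · exfalso; subst h; simp only [Nat.cast_zero] at hlamn; linarith
    · exact h
  set p : ℝ := (n : ℝ) + κ - lam with hp_def
  have hκ1 : (1:ℝ) ≤ (κ:ℝ) := by exact_mod_cast hκ
  have hnlam : lam < (n:ℝ) := hlamn
  have hp : 0 < p := by rw [hp_def]; linarith
  refine ⟨(3:ℝ) ^ p, by positivity, ?_⟩
  intro σ _ J I K hJI hIK hdist
  have hlJ := J.side_pos
  have hlI := I.side_pos
  have hsn : (1:ℝ) ≤ Real.sqrt n := by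
    have h1 : (1:ℝ) ≤ (n:ℝ) := by exact_mod_cast hn
    calc (1:ℝ) = Real.sqrt 1 := by simp
      _ ≤ Real.sqrt n := Real.sqrt_le_sqrt h1
  -- J.side < 2 * I.side
  have hside : J.side < 2 * I.side := by
    set i0 : Fin n := ⟨0, hn⟩
    have h2k : (0:ℝ) < 2 ^ J.k := by positivity
    have ha : (fun i => (J.m i : ℝ) * 2 ^ J.k) ∈ J.toSet := by
      intro i; exact ⟨le_refl _, J.lower_lt_upper i⟩
    have hb : (fun i => (J.m i : ℝ) * 2 ^ J.k + if i = i0 then (2:ℝ) ^ J.k / 2 else 0)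
        ∈ J.toSet := by
      intro i
      constructor
      · show (J.m i : ℝ) * 2 ^ J.k ≤
          (J.m i : ℝ) * 2 ^ J.k + if i = i0 then (2:ℝ) ^ J.k / 2 else 0
        split_ifs <;> nlinarith
      · show ((J.m i : ℝ) * 2 ^ J.k + if i = i0 then (2:ℝ) ^ J.k / 2 else 0) <
          ((J.m i : ℝ) + 1) * 2 ^ J.k
        split_ifs <;> nlinarith
    have h1 := (hJI ha) i0
    have h2 := (hJI hb) i0
    have hexp : ((I.m i0 : ℝ) + 1) * 2 ^ I.k = (I.m i0 : ℝ) * 2 ^ I.k + I.side := by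
      unfold DyadicCube.side; ring
    have hJs : J.side = 2 ^ J.k := rfl
    have h1' : (I.m i0 : ℝ) * 2 ^ I.k ≤ (J.m i0 : ℝ) * 2 ^ J.k := h1.1
    have h2' : ((J.m i0 : ℝ) * 2 ^ J.k + if i0 = i0 then (2:ℝ) ^ J.k / 2 else 0) <
        ((I.m i0 : ℝ) + 1) * 2 ^ I.k := h2.2
    rw [if_pos rfl, hexp] at h2'
    rw [hJs]
    linarith
  set s := K.toSet \ I.toSet with hs_def
  have hs : MeasurableSet s := K.measurableSet_toSet.diff I.measurableSet_toSet
  set A : ℝ := (3:ℝ) ^ p * (J.side / I.side) ^ ((κ:ℝ) - ε * p) with hA_def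
  have hA0 : 0 ≤ A := by rw [hA_def]; positivity
  -- pointwise kernel estimate
  have key : ∀ y ∈ s,
      ENNReal.ofReal (J.side ^ (κ:ℝ) / (J.side + dist y J.center) ^ p) ≤
        ENNReal.ofReal A *
          ENNReal.ofReal (I.side ^ (κ:ℝ) / (I.side + dist y I.center) ^ p) := by
    intro y hy
    obtain ⟨hyK, hyI⟩ := hy
    set dJ := dist y J.center with hdJ_def
    set dI := dist y I.center with hdI_def
    have hdJ0 : (0:ℝ) ≤ dJ := dist_nonneg
    have hdI0 : (0:ℝ) ≤ dI := dist_nonneg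
    have hcJ : J.center ∈ J.toSet := J.center_mem
    have hcJI : J.center ∈ I.toSet := hJI hcJ
    -- the clamped point z on the frontier of I
    set a : Fin n → ℝ := fun i => (I.m i : ℝ) * 2 ^ I.k with ha_def
    set b : Fin n → ℝ := fun i => ((I.m i : ℝ) + 1) * 2 ^ I.k with hb_def
    have hab : ∀ i, a i < b i := fun i => I.lower_lt_upper i
    set z : Fin n → ℝ := fun i => max (a i) (min (y i) (b i)) with hz_def
    have hclo : closure I.toSet = Set.pi Set.univ fun i => Set.Icc (a i) (b i) := by
      rw [I.toSet_eq, closure_pi_set]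
      exact Set.pi_congr rfl fun i _ => closure_Ico (hab i).ne
    have hint : interior I.toSet = Set.pi Set.univ fun i => Set.Ioo (a i) (b i) := by
      rw [I.toSet_eq, interior_pi_set Set.finite_univ]
      exact Set.pi_congr rfl fun i _ => interior_Ico
    have hzf : z ∈ frontier I.toSet := by
      constructor
      · rw [hclo]
        intro i _
        exact ⟨le_max_left _ _, max_le (hab i).le (min_le_right _ _)⟩
      · rw [hint]
        intro hmem
        have hyI' : ¬ ∀ i, a i ≤ y i ∧ y i < b i := hyI
        push_neg at hyI'
        obtain ⟨i, hi⟩ := hyI'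
        have hzi := hmem i (Set.mem_univ i)
        rcases lt_or_ge (y i) (a i) with h | h
        · have : z i = a i := by
            rw [hz_def]
            simp only
            rw [min_eq_left (h.le.trans (hab i).le), max_eq_left h.le]
          rw [this] at hzi
          exact lt_irrefl _ hzi.1
        · have hbi := hi h
          have : z i = b i := by
            rw [hz_def]
            simp only
            rw [min_eq_right hbi, max_eq_right (hab i).le]
          rw [this] at hzi
          exact lt_irrefl _ hzi.2
    -- lower bound on dJ
    have hD : 2 * Real.sqrt n * J.side ^ ε * I.side ^ (1 - ε) < dJ := by
      have h1 := hdist J.center hcJ z hzf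
      have h2 : dist J.center z ≤ dist J.center y := by
        rw [dist_pi_le_iff dist_nonneg]
        intro i
        have hci := hcJI i
        calc dist (J.center i) (z i) ≤ dist (J.center i) (y i) := by
              rw [Real.dist_eq, Real.dist_eq]
              exact clamp_abs_le (a i) (b i) (J.center i) (y i) hci.1 hci.2.le
          _ ≤ dist J.center y := dist_le_pi_dist _ _ i
      calc 2 * Real.sqrt n * J.side ^ ε * I.side ^ (1 - ε) < dist J.center z := h1
        _ ≤ dist J.center y := h2
        _ = dJ := dist_comm _ _
    have hD2 : 2 * (J.side ^ ε * I.side ^ (1 - ε)) ≤ dJ := by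
      have hpos : (0:ℝ) ≤ J.side ^ ε * I.side ^ (1 - ε) := by positivity
      nlinarith
    set t : ℝ := (I.side / J.side) ^ ε with ht_def
    have ht0 : 0 < t := by rw [ht_def]; positivity
    have htkey : t * (J.side ^ ε * I.side ^ (1 - ε)) = I.side := by
      have h3 : J.side ^ ε ≠ 0 := (Real.rpow_pos_of_pos hlJ ε).ne'
      have h4 : I.side ^ ε * I.side ^ (1 - ε) = I.side := by
        rw [← Real.rpow_add hlI]; norm_num
      have e1 : t * (J.side ^ ε * I.side ^ (1 - ε)) =
          I.side ^ ε / J.side ^ ε * J.side ^ ε * I.side ^ (1 - ε) := by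
        rw [ht_def, Real.div_rpow hlI.le hlJ.le]; ring
      rw [e1, div_mul_cancel₀ _ h3, h4]
    have hlIle : 2 * I.side ≤ t * dJ := by
      calc 2 * I.side = 2 * (t * (J.side ^ ε * I.side ^ (1 - ε))) := by rw [htkey]
        _ = t * (2 * (J.side ^ ε * I.side ^ (1 - ε))) := by ring
        _ ≤ t * dJ := mul_le_mul_of_nonneg_left hD2 ht0.le
    have hthalf : (1:ℝ)/2 ≤ t := by
      have h1 : ((1:ℝ)/2) ^ ε ≤ t := by
        rw [ht_def]
        apply Real.rpow_le_rpow (by norm_num) ?_ hε.le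
        rw [div_le_div_iff₀ (by norm_num) hlJ]
        linarith
      have h2 : (1:ℝ)/2 ≤ ((1:ℝ)/2) ^ ε := by
        calc (1:ℝ)/2 = ((1:ℝ)/2) ^ (1:ℝ) := (Real.rpow_one _).symm
          _ ≤ ((1:ℝ)/2) ^ ε :=
            Real.rpow_le_rpow_of_exponent_ge (by norm_num) (by norm_num) hε1.le
      linarith
    have hcc : dist J.center I.center ≤ I.side / 2 := by
      rw [dist_pi_le_iff (by positivity)]
      intro i
      have hci := hcJI i
      have hcI : I.center i = (I.m i : ℝ) * 2 ^ I.k + I.side / 2 := by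
        unfold DyadicCube.center DyadicCube.side; ring
      have hup : ((I.m i : ℝ) + 1) * 2 ^ I.k = (I.m i : ℝ) * 2 ^ I.k + I.side := by
        unfold DyadicCube.side; ring
      rw [Real.dist_eq, abs_le]
      rw [hup] at hci
      constructor <;> [skip; skip] <;> rw [hcI] <;> [linarith [hci.1]; linarith [hci.2]]
    have hdItri : dI ≤ dJ + I.side / 2 := by
      calc dI ≤ dist y J.center + dist J.center I.center := dist_triangle _ _ _
        _ ≤ dJ + I.side / 2 := by exact add_le_add_right hcc _
    have hdJle : dJ ≤ 2 * (t * dJ) := by nlinarith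
    have hexp3 : 3 * t * (J.side + dJ) = 3 * (t * J.side) + 3 * (t * dJ) := by ring
    have htlJ : 0 ≤ t * J.side := mul_nonneg ht0.le hlJ.le
    have hkey5 : I.side + dI ≤ 3 * t * (J.side + dJ) := by
      rw [hexp3]; linarith
    have hbJ : (0:ℝ) < J.side + dJ := by linarith
    have hbI : (0:ℝ) < I.side + dI := by linarith
    have hpow : (I.side + dI) ^ p ≤ (3 * t) ^ p * (J.side + dJ) ^ p := by
      rw [← Real.mul_rpow (by positivity) hbJ.le]
      exact Real.rpow_le_rpow hbI.le (by linarith [hkey5]) hp.le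
    have hconst : A * I.side ^ (κ:ℝ) = J.side ^ (κ:ℝ) * (3 * t) ^ p := by
      have h1 := (Real.rpow_pos_of_pos hlJ (κ:ℝ)).ne'
      have h2 := (Real.rpow_pos_of_pos hlI (κ:ℝ)).ne'
      have h3 := (Real.rpow_pos_of_pos hlJ (ε*p)).ne'
      have h4 := (Real.rpow_pos_of_pos hlI (ε*p)).ne'
      rw [hA_def, ht_def,
        Real.mul_rpow (by norm_num : (0:ℝ) ≤ 3)
          (Real.rpow_pos_of_pos (div_pos hlI hlJ) ε).le,
        ← Real.rpow_mul (div_pos hlI hlJ).le,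
        Real.rpow_sub (div_pos hlJ hlI),
        Real.div_rpow hlJ.le hlI.le, Real.div_rpow hlJ.le hlI.le,
        Real.div_rpow hlI.le hlJ.le]
      field_simp
    have hfinal : J.side ^ (κ:ℝ) / (J.side + dJ) ^ p ≤
        A * (I.side ^ (κ:ℝ) / (I.side + dI) ^ p) := by
      have hdenJ : (0:ℝ) < (J.side + dJ) ^ p := Real.rpow_pos_of_pos hbJ p
      have hdenI : (0:ℝ) < (I.side + dI) ^ p := Real.rpow_pos_of_pos hbI p
      have hrw : A * (I.side ^ (κ:ℝ) / (I.side + dI) ^ p) =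
          (J.side ^ (κ:ℝ) * (3 * t) ^ p) / (I.side + dI) ^ p := by
        rw [← hconst]; ring
      rw [hrw, div_le_div_iff₀ hdenJ hdenI]
      calc J.side ^ (κ:ℝ) * (I.side + dI) ^ p
          ≤ J.side ^ (κ:ℝ) * ((3 * t) ^ p * (J.side + dJ) ^ p) :=
            mul_le_mul_of_nonneg_left hpow (by positivity)
        _ = J.side ^ (κ:ℝ) * (3 * t) ^ p * (J.side + dJ) ^ p := by ring
    calc ENNReal.ofReal (J.side ^ (κ:ℝ) / (J.side + dJ) ^ p)
        ≤ ENNReal.ofReal (A * (I.side ^ (κ:ℝ) / (I.side + dI) ^ p)) :=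
          ENNReal.ofReal_le_ofReal hfinal
      _ = ENNReal.ofReal A *
          ENNReal.ofReal (I.side ^ (κ:ℝ) / (I.side + dI) ^ p) :=
          ENNReal.ofReal_mul hA0
  -- integrate
  have hmono : poisson n κ lam J (σ.restrict s) ≤
      ∫⁻ y, ENNReal.ofReal A *
        ENNReal.ofReal (I.side ^ (κ:ℝ) / (I.side + dist y I.center) ^ p)
        ∂(σ.restrict s) := by
    unfold poisson
    rw [← hp_def]
    exact lintegral_mono_ae ((ae_restrict_iff' hs).2 (ae_of_all _ key))
  rw [lintegral_const_mul' _ _ ENNReal.ofReal_ne_top] at hmono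
  calc poisson n κ lam J (σ.restrict s) ≤
      ENNReal.ofReal A * ∫⁻ y,
        ENNReal.ofReal (I.side ^ (κ:ℝ) / (I.side + dist y I.center) ^ p)
        ∂(σ.restrict s) := hmono
    _ = ENNReal.ofReal A * poisson n κ lam I (σ.restrict s) := by
        unfold poisson; rw [← hp_def]
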